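/- arXiv:math/0412333 — 6 statements merged into one kernel-verified Lean document; each statement's English description precedes it below -/
import Mathlib

section
/- Let (Z_n), (ξ_n), (ζ_n) be nonnegative real-valued random variables adapted to an increasing sequence of σ-algebras (F_n), satisfying E(Z_{n+1} | F_n) ≤ Z_n + ξ_n − ζ_n for all n. Then almost surely on the event {∑_n ξ_n < ∞}, the limit lim_n Z_n exists and is finite and ∑_n ζ_n < ∞. -/
/-!
`Y n = Z n - ∑_{k<n} (ξ k - ζ k)` is a supermartingale with `-Y n ≤ ∑_{k<n} ξ k`. Stopping `-Y`
just before the predictable partial sums `∑_{k≤n} ξ k` reach a level `a` gives a submartingale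
bounded above by `a`, hence bounded in L¹ and a.e. convergent. Where `∑ ξ n` converges this
stopping never happens once `a` is large, so `Y` converges there; then `Z n + ∑_{k<n} ζ k`
converges, which forces `∑ ζ n < ∞` and the convergence of `Z n`.
-/

open MeasureTheory Filter Topology Finset

namespace MeasureTheory

variable {Ω : Type*} {m0 : MeasurableSpace Ω} {μ : Measure Ω} {ℱ : Filtration ℕ m0}

theorem StronglyAdapted.stronglyMeasurable_sum_range {ξ : ℕ → Ω → ℝ} (hξ : StronglyAdapted ℱ ξ)
    {m n : ℕ} (hmn : m ≤ n + 1) : StronglyMeasurable[ℱ n] (∑ k ∈ range m, ξ k) :=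
  Finset.stronglyMeasurable_sum _ fun k hk =>
    (hξ k).mono (ℱ.mono (Nat.lt_succ_iff.mp ((Finset.mem_range.mp hk).trans_le hmn)))

theorem Submartingale.eLpNorm_one_le_of_ae_le [IsFiniteMeasure μ] {f : ℕ → Ω → ℝ}
    (hf : Submartingale f ℱ μ) {c : ℝ} (hc : ∀ n, ∀ᵐ ω ∂μ, f n ω ≤ c) (n : ℕ) :
    eLpNorm (f n) 1 μ ≤ ENNReal.ofReal (2 * |c| * μ.real Set.univ - ∫ ω, f 0 ω ∂μ) := by
  have habs : ∀ᵐ ω ∂μ, ‖f n ω‖ ≤ 2 * |c| - f n ω := by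
    filter_upwards [hc n] with ω hω
    rw [Real.norm_eq_abs]
    cases abs_cases (f n ω) <;> cases abs_cases c <;> linarith
  have hmono : ∫ ω, f 0 ω ∂μ ≤ ∫ ω, f n ω ∂μ := by
    simpa using hf.setIntegral_le (Nat.zero_le n) MeasurableSet.univ
  rw [eLpNorm_one_eq_lintegral_enorm, ← ofReal_integral_norm_eq_lintegral_enorm (hf.integrable n)]
  refine ENNReal.ofReal_le_ofReal ?_
  calc ∫ ω, ‖f n ω‖ ∂μ ≤ ∫ ω, (2 * |c| - f n ω) ∂μ :=
        integral_mono_ae (hf.integrable n).norm ((integrable_const _).sub (hf.integrable n)) habs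
    _ = 2 * |c| * μ.real Set.univ - ∫ ω, f n ω ∂μ := by
        rw [integral_sub (integrable_const _) (hf.integrable n), integral_const, smul_eq_mul,
          mul_comm]
    _ ≤ 2 * |c| * μ.real Set.univ - ∫ ω, f 0 ω ∂μ := by linarith

theorem Submartingale.exists_ae_tendsto_of_ae_le [IsFiniteMeasure μ] {f : ℕ → Ω → ℝ}
    (hf : Submartingale f ℱ μ) {c : ℝ} (hc : ∀ n, ∀ᵐ ω ∂μ, f n ω ≤ c) :
    ∀ᵐ ω ∂μ, ∃ x, Tendsto (fun n => f n ω) atTop (𝓝 x) :=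
  hf.exists_ae_tendsto_of_bdd (hf.eLpNorm_one_le_of_ae_le hc)

theorem exists_stoppedProcess_eq {β : Type*} (u : ℕ → Ω → β) (τ : Ω → WithTop ℕ) (n : ℕ)
    (ω : Ω) : ∃ m : ℕ, (m : WithTop ℕ) ≤ τ ω ∧ stoppedProcess u τ n ω = u m ω := by
  rcases le_total (n : WithTop ℕ) (τ ω) with h | h
  · exact ⟨n, h, stoppedProcess_eq_of_le h⟩
  · obtain ⟨t, ht⟩ := WithTop.ne_top_iff_exists.1 (ne_top_of_le_ne_top WithTop.coe_ne_top h)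
    exact ⟨t, ht.le, by rw [stoppedProcess_eq_of_ge (u := u) (i := n) h, ← ht]; rfl⟩

theorem Submartingale.exists_ae_tendsto_of_le_sum [IsFiniteMeasure μ] {f ξ : ℕ → Ω → ℝ}
    (hf : Submartingale f ℱ μ) (hξ : StronglyAdapted ℱ ξ)
    (hle : ∀ n, f n ≤ᵐ[μ] ∑ k ∈ range n, ξ k) :
    ∀ᵐ ω ∂μ, BddAbove (Set.range fun n => ∑ k ∈ range n, ξ k ω) →
      ∃ c, Tendsto (fun n => f n ω) atTop (𝓝 c) := by
  set S : ℕ → Ω → ℝ := fun n => ∑ k ∈ range (n + 1), ξ k with hS_def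
  have hS : StronglyAdapted ℱ S := fun n => hξ.stronglyMeasurable_sum_range le_rfl
  have hstopped (a : ℕ) : ∀ᵐ ω ∂μ, ∃ c,
      Tendsto (fun n => stoppedProcess f (leastGE S (a : ℝ)) n ω) atTop (𝓝 c) := by
    refine (hf.stoppedProcess (hS.isStoppingTime_leastGE _)).exists_ae_tendsto_of_ae_le
      (c := a) fun n => ?_
    filter_upwards [ae_all_iff.2 hle] with ω hω
    obtain ⟨m, hmτ, hm⟩ := exists_stoppedProcess_eq f (leastGE S (a : ℝ)) n ω
    refine hm ▸ (hω m).trans ?_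
    cases m with
    | zero => simp
    | succ k =>
      have := notMem_of_lt_hittingAfter (lt_of_lt_of_le (WithTop.coe_lt_coe.2 k.lt_succ_self) hmτ)
        bot_le
      simp only [Set.mem_Ici, not_le, hS_def, Finset.sum_apply] at this
      simpa [Finset.sum_apply] using this.le
  filter_upwards [ae_all_iff.2 hstopped] with ω hω ⟨M, hM⟩
  obtain ⟨a, ha⟩ := exists_nat_gt M
  have hτ : leastGE S (a : ℝ) ω = ⊤ := hittingAfter_eq_top_iff.2 fun j _ => by
    simpa [hS_def, Finset.sum_apply] using (hM ⟨j + 1, rfl⟩).trans_lt ha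
  simpa [stoppedProcess_eq_of_le, hτ] using hω a

theorem supermartingale_sub_sum_of_condExp_le [IsFiniteMeasure μ] {Z η : ℕ → Ω → ℝ}
    (hZ : StronglyAdapted ℱ Z) (hη : StronglyAdapted ℱ η) (hZint : ∀ n, Integrable (Z n) μ)
    (hηint : ∀ n, Integrable (η n) μ) (h : ∀ n, μ[Z (n + 1) | ℱ n] ≤ᵐ[μ] Z n + η n) :
    Supermartingale (fun n => Z n - ∑ k ∈ range n, η k) ℱ μ := by
  have hsum_int (n : ℕ) : Integrable (∑ k ∈ range n, η k) μ :=
    integrable_finsetSum' _ fun k _ => hηint k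
  refine supermartingale_nat (fun n => (hZ n).sub (hη.stronglyMeasurable_sum_range n.le_succ))
    (fun n => (hZint n).sub (hsum_int n)) fun n => ?_
  have hsplit : μ[Z (n + 1) - ∑ k ∈ range (n + 1), η k | ℱ n] =ᵐ[μ]
      μ[Z (n + 1) | ℱ n] - ∑ k ∈ range (n + 1), η k := by
    filter_upwards [condExp_sub (m := ℱ n) (hZint (n + 1)) (hsum_int (n + 1))] with ω hω
    rw [hω, Pi.sub_apply, Pi.sub_apply,
      condExp_of_stronglyMeasurable (ℱ.le n) (hη.stronglyMeasurable_sum_range le_rfl)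
        (hsum_int (n + 1))]
  filter_upwards [hsplit, h n] with ω hω hZω
  rw [hω]
  simp only [Pi.sub_apply, Pi.add_apply, Finset.sum_apply, Finset.sum_range_succ] at hZω ⊢
  linarith

end MeasureTheory

theorem exists_tendsto_and_summable_of_tendsto_sub_sum {z x y : ℕ → ℝ} (hz : ∀ n, 0 ≤ z n)
    (hy : ∀ n, 0 ≤ y n) (hx : Summable x) {c : ℝ}
    (h : Tendsto (fun n => z n - ∑ k ∈ range n, (x k - y k)) atTop (𝓝 c)) :
    (∃ c, Tendsto z atTop (𝓝 c)) ∧ Summable y := by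
  have hzy : Tendsto (fun n => z n + ∑ k ∈ range n, y k) atTop (𝓝 (c + ∑' k, x k)) := by
    refine (h.add hx.hasSum.tendsto_sum_nat).congr fun n => ?_
    rw [Finset.sum_sub_distrib]
    ring
  obtain ⟨M, hM⟩ := hzy.bddAbove_range
  have hysum : Summable y := summable_of_sum_range_le hy fun n =>
    (le_add_of_nonneg_left (hz n)).trans (hM ⟨n, rfl⟩)
  exact ⟨⟨_, (hzy.sub hysum.hasSum.tendsto_sum_nat).congr fun n => add_sub_cancel_right _ _⟩, hysum⟩

theorem robbins_siegmund_general
    {Ω : Type*} {m0 : MeasurableSpace Ω} {μ : Measure Ω} [IsProbabilityMeasure μ]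
    (ℱ : Filtration ℕ m0) (Z ξ ζ : ℕ → Ω → ℝ)
    (hZadapt : Adapted ℱ Z) (hξadapt : Adapted ℱ ξ) (hζadapt : Adapted ℱ ζ)
    (hZint : ∀ n, Integrable (Z n) μ) (hξint : ∀ n, Integrable (ξ n) μ)
    (hζint : ∀ n, Integrable (ζ n) μ)
    (hZ0 : ∀ n, 0 ≤ᵐ[μ] Z n) (hζ0 : ∀ n, 0 ≤ᵐ[μ] ζ n)
    (hsup : ∀ n, μ[Z (n + 1) | ℱ n] ≤ᵐ[μ] Z n + ξ n - ζ n) :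
    ∀ᵐ ω ∂μ, Summable (fun n => ξ n ω) →
      (∃ c : ℝ, Tendsto (fun n => Z n ω) atTop (nhds c)) ∧
        Summable (fun n => ζ n ω) := by
  have hY : Supermartingale (fun n => Z n - ∑ k ∈ range n, (ξ - ζ) k) ℱ μ :=
    supermartingale_sub_sum_of_condExp_le hZadapt.stronglyAdapted
      (fun n => (hξadapt.stronglyAdapted n).sub (hζadapt.stronglyAdapted n)) hZint
      (fun n => (hξint n).sub (hζint n)) fun n => by
        filter_upwards [hsup n] with ω hω
        simpa [add_sub_assoc] using hω
  have hle (n : ℕ) : -(Z n - ∑ k ∈ range n, (ξ - ζ) k) ≤ᵐ[μ] ∑ k ∈ range n, ξ k := by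
    filter_upwards [hZ0 n, ae_all_iff.2 hζ0] with ω hZω hζω
    simp only [Pi.zero_apply, Pi.neg_apply, Pi.sub_apply, Finset.sum_apply,
      Finset.sum_sub_distrib] at hZω hζω ⊢
    linarith [Finset.sum_nonneg fun k (_ : k ∈ range n) => hζω k]
  filter_upwards [hY.neg.exists_ae_tendsto_of_le_sum hξadapt.stronglyAdapted hle,
    ae_all_iff.2 hZ0, ae_all_iff.2 hζ0] with ω hconv hZω hζω hξω
  obtain ⟨c, hc⟩ := hconv hξω.hasSum.tendsto_sum_nat.bddAbove_range
  refine exists_tendsto_and_summable_of_tendsto_sub_sum hZω hζω hξω (c := -c) ?_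
  simpa using hc.neg

theorem robbins_siegmund
    {Ω : Type*} {m0 : MeasurableSpace Ω} {μ : Measure Ω} [IsProbabilityMeasure μ]
    (ℱ : Filtration ℕ m0) (Z ξ ζ : ℕ → Ω → ℝ)
    (hZadapt : Adapted ℱ Z) (hξadapt : Adapted ℱ ξ) (hζadapt : Adapted ℱ ζ)
    (hZint : ∀ n, Integrable (Z n) μ) (hξint : ∀ n, Integrable (ξ n) μ)
    (hζint : ∀ n, Integrable (ζ n) μ)
    (hZ0 : ∀ n, 0 ≤ᵐ[μ] Z n) (hξ0 : ∀ n, 0 ≤ᵐ[μ] ξ n) (hζ0 : ∀ n, 0 ≤ᵐ[μ] ζ n)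
    (hsup : ∀ n, μ[Z (n + 1) | ℱ n] ≤ᵐ[μ] Z n + ξ n - ζ n) :
    ∀ᵐ ω ∂μ, Summable (fun n => ξ n ω) →
      (∃ c : ℝ, Tendsto (fun n => Z n ω) atTop (nhds c)) ∧
        Summable (fun n => ζ n ω) :=
  robbins_siegmund_general ℱ Z ξ ζ hZadapt hξadapt hζadapt hZint hξint hζint hZ0 hζ0 hsup
end

section
/- Let G be a finite group and p a probability distribution on G with ∑_{g} ((T(p))_g)² = ∑_{g} p_g², where (T(p))_g = ∑_{h} p_{g·h⁻¹} p_h. Then p is constant on its support, i.e., there is c > 0 with p_g ∈ {0, c} for all g ∈ G. -/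
lemma weighted_var_aux {ι : Type*} [Fintype ι] (w f : ι → ℝ) (hw : ∑ i, w i = 1) :
    ∑ i, ∑ j, w i * w j * (f i - f j) ^ 2
      = 2 * (∑ i, w i * f i ^ 2) - 2 * (∑ i, w i * f i) ^ 2 := by
  have h : ∀ i j : ι, w i * w j * (f i - f j) ^ 2
      = w i * f i ^ 2 * w j - 2 * ((w i * f i) * (w j * f j)) + w i * (w j * f j ^ 2) := by
    intro i j; ring
  simp_rw [h, Finset.sum_add_distrib, Finset.sum_sub_distrib, ← Finset.mul_sum,
    ← Finset.sum_mul, hw]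
  ring

theorem convolution_sq_sum_eq_imp_const_on_support {G : Type*} [Group G] [Fintype G]
    (p : G → ℝ) (hp0 : ∀ g, 0 ≤ p g) (hp1 : ∑ g, p g = 1)
    (heq : ∑ g, (∑ h, p (g * h⁻¹) * p h) ^ 2 = ∑ g, (p g) ^ 2) :
    ∃ c : ℝ, 0 < c ∧ ∀ g, p g = 0 ∨ p g = c := by
  classical
  -- Step A: ∑ g, ∑ h, p (g*h⁻¹)^2 * p h = ∑ g, p g ^ 2
  have hA : ∑ g, ∑ h, p h * p (g * h⁻¹) ^ 2 = ∑ g, p g ^ 2 := by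
    rw [Finset.sum_comm]
    have : ∀ h : G, ∑ g, p h * p (g * h⁻¹) ^ 2 = p h * ∑ g, p g ^ 2 := by
      intro h
      rw [← Finset.mul_sum]
      congr 1
      exact Fintype.sum_equiv (Equiv.mulRight h⁻¹) _ _ (by
        intro x; simp)
    simp_rw [this, ← Finset.sum_mul, hp1, one_mul]
  -- Step B: total "variance" sum is zero
  have hB : ∑ g, ∑ h, ∑ h', p h * p h' * (p (g * h⁻¹) - p (g * h'⁻¹)) ^ 2 = 0 := by
    have : ∀ g : G, ∑ h, ∑ h', p h * p h' * (p (g * h⁻¹) - p (g * h'⁻¹)) ^ 2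
        = 2 * (∑ h, p h * p (g * h⁻¹) ^ 2) - 2 * (∑ h, p h * p (g * h⁻¹)) ^ 2 := by
      intro g
      exact weighted_var_aux p (fun h => p (g * h⁻¹)) hp1
    simp_rw [this, Finset.sum_sub_distrib, ← Finset.mul_sum, hA]
    have : ∀ g : G, (∑ h, p h * p (g * h⁻¹)) ^ 2 = (∑ h, p (g * h⁻¹) * p h) ^ 2 := by
      intro g; congr 1; exact Finset.sum_congr rfl (fun h _ => mul_comm _ _)
    simp_rw [this, heq]
    ring
  -- Each term is zero
  have hterm : ∀ g h h' : G, p h * p h' * (p (g * h⁻¹) - p (g * h'⁻¹)) ^ 2 = 0 := by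
    have h1 : ∀ g ∈ (Finset.univ : Finset G),
        (0:ℝ) ≤ ∑ h, ∑ h', p h * p h' * (p (g * h⁻¹) - p (g * h'⁻¹)) ^ 2 := by
      intro g _
      exact Finset.sum_nonneg fun h _ => Finset.sum_nonneg fun h' _ =>
        mul_nonneg (mul_nonneg (hp0 h) (hp0 h')) (sq_nonneg _)
    have h2 := (Finset.sum_eq_zero_iff_of_nonneg h1).mp hB
    intro g h h'
    have h3 := (Finset.sum_eq_zero_iff_of_nonneg (fun h _ =>
      Finset.sum_nonneg fun h' _ => mul_nonneg (mul_nonneg (hp0 h) (hp0 h'))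
        (sq_nonneg _))).mp (h2 g (Finset.mem_univ g)) h (Finset.mem_univ h)
    exact (Finset.sum_eq_zero_iff_of_nonneg (fun h' _ =>
      mul_nonneg (mul_nonneg (hp0 h) (hp0 h')) (sq_nonneg _))).mp h3 h' (Finset.mem_univ h')
  -- Key invariance: for h,h' in support, p(g h⁻¹) = p(g h'⁻¹)
  have key : ∀ g h h' : G, p h ≠ 0 → p h' ≠ 0 → p (g * h⁻¹) = p (g * h'⁻¹) := by
    intro g h h' hh hh'
    have := hterm g h h'
    rcases mul_eq_zero.mp this with h1 | h1
    · rcases mul_eq_zero.mp h1 with h2 | h2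
      · exact absurd h2 hh
      · exact absurd h2 hh'
    · have := pow_eq_zero_iff (n := 2) (by norm_num) |>.mp h1
      linarith
  -- conjugation invariance: p(a b a⁻¹) = p a for a, b in support
  have conj : ∀ a b : G, p a ≠ 0 → p b ≠ 0 → p (a * b * a⁻¹) = p a := by
    intro a b ha hb
    have := key (a * b) b a hb ha
    rw [mul_inv_cancel_right] at this
    exact this.symm
  -- support is nonempty
  have hne : ∃ a, p a ≠ 0 := by
    by_contra h
    push_neg at h
    simp [h] at hp1
  obtain ⟨a, ha⟩ := hne
  refine ⟨p a, lt_of_le_of_ne (hp0 a) (Ne.symm ha), ?_⟩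
  intro g
  by_cases hg : p g = 0
  · exact Or.inl hg
  · right
    -- conjugation by a permutes the support
    set S : Finset G := Finset.univ.filter (fun x => p x ≠ 0) with hS
    have hmem : ∀ x, x ∈ S ↔ p x ≠ 0 := by intro x; simp [hS]
    have hφinj : Function.Injective (fun x : G => a * x * a⁻¹) := by
      intro x y hxy
      simpa using hxy
    have himg : S.image (fun x : G => a * x * a⁻¹) ⊆ S := by
      intro c hc
      rw [Finset.mem_image] at hc
      obtain ⟨b, hb, rfl⟩ := hc
      rw [hmem] at hb ⊢
      rw [conj a b ha hb]
      exact ha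
    have hcard : (S.image (fun x : G => a * x * a⁻¹)).card = S.card :=
      Finset.card_image_of_injective _ hφinj
    have heqS : S.image (fun x : G => a * x * a⁻¹) = S :=
      Finset.eq_of_subset_of_card_le himg (le_of_eq hcard.symm)
    have hgS : g ∈ S := (hmem g).mpr hg
    rw [← heqS, Finset.mem_image] at hgS
    obtain ⟨b, hb, hbg⟩ := hgS
    rw [← hbg]
    exact conj a b ha ((hmem b).mp hb)
end

section
/- Let G be a finite group and p a probability distribution on G that is a fixed point of the convolution map, i.e., p_g = ∑_{h ∈ G} p_{g·h⁻¹} p_h for all g ∈ G. Then the support of p, {g ∈ G : p_g > 0}, is a subgroup of G. -/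
theorem support_of_fixed_point_is_subgroup {G : Type*} [Group G] [Fintype G]
    (p : G → ℝ) (hp0 : ∀ g, 0 ≤ p g) (hp1 : ∑ g, p g = 1)
    (hfix : ∀ g, p g = ∑ h, p (g * h⁻¹) * p h) :
    ∃ H : Subgroup G, (H : Set G) = {g : G | 0 < p g} := by
  have hmul : ∀ a b : G, 0 < p a → 0 < p b → 0 < p (a * b) := by
    intro a b ha hb
    have hle : p ((a * b) * b⁻¹) * p b ≤ ∑ h, p ((a * b) * h⁻¹) * p h :=
      Finset.single_le_sum (f := fun h => p ((a * b) * h⁻¹) * p h)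
        (fun h _ => mul_nonneg (hp0 _) (hp0 _)) (Finset.mem_univ b)
    rw [mul_inv_cancel_right] at hle
    calc (0:ℝ) < p a * p b := mul_pos ha hb
      _ ≤ ∑ h, p ((a * b) * h⁻¹) * p h := hle
      _ = p (a * b) := (hfix _).symm
  have hpow : ∀ (a : G) (n : ℕ), 0 < p a → 0 < p (a ^ (n + 1)) := by
    intro a n ha
    induction n with
    | zero => simpa using ha
    | succ k ih => rw [pow_succ]; exact hmul _ _ ih ha
  obtain ⟨g, hg⟩ : ∃ g, 0 < p g := by
    by_contra h
    push_neg at h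
    have : ∑ g, p g = 0 :=
      Finset.sum_eq_zero fun g _ => le_antisymm (h g) (hp0 g)
    simp [this] at hp1
  have hone : 0 < p 1 := by
    obtain ⟨k, hk⟩ : ∃ k, orderOf g = k + 1 :=
      Nat.exists_eq_add_of_lt (orderOf_pos g) |>.imp fun k h => by omega
    have := hpow g k hg
    rwa [← hk, pow_orderOf_eq_one] at this
  have hinv : ∀ a : G, 0 < p a → 0 < p a⁻¹ := by
    intro a ha
    obtain ⟨k, hk⟩ : ∃ k, orderOf a = k + 1 :=
      Nat.exists_eq_add_of_lt (orderOf_pos a) |>.imp fun k h => by omega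
    have hak : a⁻¹ = a ^ k :=
      inv_eq_of_mul_eq_one_right (by rw [← pow_succ', ← hk, pow_orderOf_eq_one])
    rw [hak]
    cases k with
    | zero => simpa using hone
    | succ m => exact hpow a m ha
  exact ⟨{ carrier := {g : G | 0 < p g}
           mul_mem' := fun ha hb => hmul _ _ ha hb
           one_mem' := hone
           inv_mem' := fun ha => hinv _ ha }, rfl⟩
end

section
/- Let G be a finite group. A probability distribution p on G satisfies p = T(p), where (T(p))_g = ∑_{h ∈ G} p_{g·h⁻¹} p_h, if and only if p is the uniform distribution on some subgroup H of G (i.e., p_g = 1/|H| for g ∈ H and p_g = 0 otherwise). -/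
theorem fixed_point_iff_uniform_on_subgroup {G : Type*} [Group G] [Fintype G]
    (p : G → ℝ) (hp0 : ∀ g, 0 ≤ p g) (hp1 : ∑ g, p g = 1) :
    (∀ g, p g = ∑ h, p (g * h⁻¹) * p h) ↔
      ∃ H : Subgroup G, (∀ g ∈ H, p g = ((Nat.card H : ℝ))⁻¹) ∧ ∀ g ∉ H, p g = 0 := by
  classical
  constructor
  · intro hfix
    obtain ⟨g₀, -, hg₀⟩ := Finset.exists_max_image Finset.univ p ⟨1, Finset.mem_univ 1⟩
    set M := p g₀ with hM
    have hMle : ∀ g, p g ≤ M := fun g => hg₀ g (Finset.mem_univ g)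
    have hMpos : 0 < M := by
      by_contra h
      push_neg at h
      have hz : ∀ g, p g = 0 := fun g => le_antisymm (le_trans (hMle g) h) (hp0 g)
      simp [hz] at hp1
    have key : ∀ g, p g = M → ∀ h, 0 < p h → p (g * h⁻¹) = M := by
      intro g hg h hh
      have hsum : ∑ x, (M - p (g * x⁻¹)) * p x = 0 := by
        have hMs : ∑ x, M * p x = M := by rw [← Finset.mul_sum, hp1, mul_one]
        have h2 := hfix g
        rw [hg] at h2
        calc ∑ x, (M - p (g * x⁻¹)) * p x
            = ∑ x, M * p x - ∑ x, p (g * x⁻¹) * p x := by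
              rw [← Finset.sum_sub_distrib]
              exact Finset.sum_congr rfl (fun x _ => by ring)
          _ = M - M := by rw [hMs, ← h2]
          _ = 0 := sub_self M
      have hnn : ∀ x ∈ Finset.univ, 0 ≤ (M - p (g * x⁻¹)) * p x := by
        intro x _
        exact mul_nonneg (by linarith [hMle (g * x⁻¹)]) (hp0 x)
      have hz := (Finset.sum_eq_zero_iff_of_nonneg hnn).mp hsum h (Finset.mem_univ h)
      rcases mul_eq_zero.mp hz with h1 | h1
      · linarith
      · exact absurd h1 (ne_of_gt hh)
    have hone : p 1 = M := by
      have := key g₀ rfl g₀ hMpos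
      simpa using this
    have hinvmem : ∀ h, 0 < p h → p h⁻¹ = M := by
      intro h hh
      have := key 1 hone h hh
      simpa using this
    have hsupp : ∀ h, 0 < p h → p h = M := by
      intro h hh
      have h1 : p h⁻¹ = M := hinvmem h hh
      have h2 : p (h⁻¹)⁻¹ = M := hinvmem h⁻¹ (by rw [h1]; exact hMpos)
      simpa using h2
    have hmul : ∀ g h, p g = M → p h = M → p (g * h) = M := by
      intro g h hg hh
      have h1 : p h⁻¹ = M := hinvmem h (by rw [hh]; exact hMpos)
      have := key g hg h⁻¹ (by rw [h1]; exact hMpos)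
      simpa using this
    have hH : ∃ H : Subgroup G, ∀ x, x ∈ H ↔ p x = M := by
      refine ⟨{ carrier := {g | p g = M}, one_mem' := hone,
                mul_mem' := fun ha hb => hmul _ _ ha hb,
                inv_mem' := fun {a} ha => hinvmem a ?_ }, fun x => Iff.rfl⟩
      rw [Set.mem_setOf_eq] at ha; rw [ha]; exact hMpos
    obtain ⟨H, hHmem⟩ := hH
    have hzero : ∀ x, x ∉ H → p x = 0 := by
      intro x hx
      by_contra hne
      exact hx ((hHmem x).mpr (hsupp x (lt_of_le_of_ne (hp0 x) (Ne.symm hne))))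
    refine ⟨H, ?_, fun g hg => hzero g hg⟩
    intro g hg
    have hgM : p g = M := (hHmem g).mp hg
    have hcardfin : (Finset.univ.filter (fun x => x ∈ H)).card = Nat.card H := by
      rw [Nat.card_eq_fintype_card, Fintype.card_subtype]
    have hsplit : ((Nat.card H : ℝ)) * M = 1 := by
      have h1 : ∑ x ∈ Finset.univ.filter (fun x => x ∈ H), p x
          + ∑ x ∈ Finset.univ.filter (fun x => x ∉ H), p x = 1 := by
        rw [Finset.sum_filter_add_sum_filter_not, hp1]
      have h2 : ∑ x ∈ Finset.univ.filter (fun x => x ∉ H), p x = 0 :=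
        Finset.sum_eq_zero (fun x hx => hzero x (Finset.mem_filter.mp hx).2)
      have h3 : ∑ x ∈ Finset.univ.filter (fun x => x ∈ H), p x
          = ((Nat.card H : ℝ)) * M := by
        rw [Finset.sum_congr rfl
          (fun x hx => (hHmem x).mp (Finset.mem_filter.mp hx).2 : ∀ x ∈ _, p x = M)]
        rw [Finset.sum_const, hcardfin, nsmul_eq_mul]
      rw [h3, h2, add_zero] at h1
      exact h1
    have hcne : (Nat.card H : ℝ) ≠ 0 := by
      intro h0
      rw [h0, zero_mul] at hsplit
      norm_num at hsplit
    rw [hgM]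
    rw [Nat.card_eq_fintype_card] at hsplit hcne ⊢
    field_simp
    linarith [hsplit]
  · rintro ⟨H, hin, hout⟩ g
    have hcard : (0:ℝ) < Nat.card H := by exact_mod_cast Nat.card_pos
    have hcardfin : (Finset.univ.filter (fun x => x ∈ H)).card = Nat.card H := by
      rw [Nat.card_eq_fintype_card, Fintype.card_subtype]
    by_cases hg : g ∈ H
    · rw [hin g hg]
      have hterm : ∀ h, p (g * h⁻¹) * p h
          = if h ∈ H then ((Nat.card H:ℝ))⁻¹ * ((Nat.card H:ℝ))⁻¹ else 0 := by
        intro h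
        by_cases hh : h ∈ H
        · rw [if_pos hh, hin h hh, hin (g * h⁻¹) (H.mul_mem hg (H.inv_mem hh))]
        · rw [if_neg hh, hout h hh, mul_zero]
      rw [Finset.sum_congr rfl (fun h _ => hterm h), ← Finset.sum_filter]
      rw [Finset.sum_const, hcardfin, nsmul_eq_mul]
      field_simp
    · rw [hout g hg]
      symm
      apply Finset.sum_eq_zero
      intro h _
      by_cases hh : h ∈ H
      · have : g * h⁻¹ ∉ H := by
          intro hm
          exact hg (by simpa using H.mul_mem hm hh)
        rw [hout _ this, zero_mul]
      · rw [hout h hh, mul_zero]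
end

section
/- Let G be a finite group and H a proper subgroup of G. For any probability distribution p on G, let u = ∑_{g ∉ H} p_g be the probability p assigns to the complement of H. Then ∑_{g ∉ H} (T(p))_g ≥ 2u(1 − u), where (T(p))_g = ∑_{h} p_{g·h⁻¹} p_h. -/
open scoped Classical

theorem convolution_complement_lower_bound {G : Type*} [Group G] [Fintype G]
    (H : Subgroup G) (hH : H ≠ ⊤)
    (p : G → ℝ) (hp0 : ∀ g, 0 ≤ p g) (hp1 : ∑ g, p g = 1) :
    2 * (∑ g ∈ Finset.univ.filter (fun g => g ∉ H), p g) *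
        (1 - ∑ g ∈ Finset.univ.filter (fun g => g ∉ H), p g) ≤
      ∑ g ∈ Finset.univ.filter (fun g => g ∉ H), ∑ h, p (g * h⁻¹) * p h := by
  classical
  set A : Finset G := Finset.univ.filter (fun g => g ∉ H) with hA
  set B : Finset G := Finset.univ.filter (fun g => g ∈ H) with hB
  set u : ℝ := ∑ g ∈ A, p g with hu
  have hAB : Disjoint A B := by
    rw [Finset.disjoint_left]
    intro a ha hb
    simp [hA, hB] at ha hb
    exact ha hb
  have hunion : A ∪ B = Finset.univ := by
    ext x; simp [hA, hB]; tauto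
  have hsplit : ∑ g ∈ A, p g + ∑ g ∈ B, p g = 1 := by
    rw [← Finset.sum_union hAB, hunion, hp1]
  have h1u : (1 : ℝ) - u = ∑ g ∈ B, p g := by rw [hu]; linarith
  have key : ∑ g ∈ A, ∑ h : G, p (g * h⁻¹) * p h
      = ∑ y ∈ Finset.univ.filter (fun y : G × G => y.1 * y.2 ∉ H), p y.1 * p y.2 := by
    rw [← Finset.sum_product']
    apply Finset.sum_nbij' (fun x : G × G => (x.1 * x.2⁻¹, x.2))
      (fun y : G × G => (y.1 * y.2, y.2))
    · intro x hx
      simp [hA] at hx ⊢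
      simpa using hx
    · intro y hy
      simp [hA] at hy ⊢
      exact hy
    · intro x _
      simp
    · intro y _
      simp
    · intro x _
      simp
  rw [key]
  have hsub : A ×ˢ B ∪ B ×ˢ A ⊆
      Finset.univ.filter (fun y : G × G => y.1 * y.2 ∉ H) := by
    intro y hy
    simp only [Finset.mem_union, Finset.mem_product, hA, hB, Finset.mem_filter,
      Finset.mem_univ, true_and] at hy ⊢
    rcases hy with ⟨h1, h2⟩ | ⟨h1, h2⟩
    · intro hmem
      exact h1 (by simpa using H.mul_mem hmem (H.inv_mem h2))
    · intro hmem
      exact h2 (by simpa using H.mul_mem (H.inv_mem h1) hmem)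
  have hdisj : Disjoint (A ×ˢ B) (B ×ˢ A) := by
    rw [Finset.disjoint_left]
    intro y hy hy'
    rw [Finset.mem_product] at hy hy'
    exact Finset.disjoint_left.mp hAB hy.1 hy'.1
  calc 2 * u * (1 - u) = u * (1 - u) + (1 - u) * u := by ring
    _ = (∑ a ∈ A, p a) * (∑ b ∈ B, p b) + (∑ a ∈ B, p a) * (∑ b ∈ A, p b) := by
        rw [h1u, hu]
    _ = ∑ y ∈ A ×ˢ B ∪ B ×ˢ A, p y.1 * p y.2 := by
        rw [Finset.sum_union hdisj, Finset.sum_product, Finset.sum_product,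
          ← Finset.sum_mul_sum, ← Finset.sum_mul_sum]
    _ ≤ ∑ y ∈ Finset.univ.filter (fun y : G × G => y.1 * y.2 ∉ H), p y.1 * p y.2 := by
        apply Finset.sum_le_sum_of_subset_of_nonneg hsub
        intro y _ _
        exact mul_nonneg (hp0 _) (hp0 _)
end

section
/- Let 0 < s < 1 and 0 < t < 1, and let T(p) = p(1 − p s)/(1 − p² s − (1 − p)² t) and q* = t/(s + t). Then for every p ∈ (0,1) with p ≠ q*, |T(p) − q*| < |p − q*|. -/
theorem genetics_map_contracting (s t : ℝ) (hs : s ∈ Set.Ioo (0 : ℝ) 1)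
    (ht : t ∈ Set.Ioo (0 : ℝ) 1) (T : ℝ → ℝ)
    (hT : ∀ p, T p = p * (1 - p * s) / (1 - p ^ 2 * s - (1 - p) ^ 2 * t))
    (p : ℝ) (hp : p ∈ Set.Ioo (0 : ℝ) 1) (hpq : p ≠ t / (s + t)) :
    |T p - t / (s + t)| < |p - t / (s + t)| := by
  obtain ⟨hs0, hs1⟩ := hs
  obtain ⟨ht0, ht1⟩ := ht
  obtain ⟨hp0, hp1⟩ := hp
  have hst : 0 < s + t := by linarith
  have hD : 0 < 1 - p ^ 2 * s - (1 - p) ^ 2 * t := by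
    nlinarith [mul_pos hp0 (by linarith : (0:ℝ) < 1 - p), sq_nonneg p, sq_nonneg (1-p),
      mul_pos (mul_pos hp0 hp0) (by linarith : (0:ℝ) < 1 - s),
      mul_pos (mul_pos (by linarith : (0:ℝ) < 1 - p) (by linarith : (0:ℝ) < 1 - p))
        (by linarith : (0:ℝ) < 1 - t)]
  have hnum : 0 < 1 - t + (t - s) * p := by
    nlinarith [mul_pos (by linarith : (0:ℝ) < 1 - t) (by linarith : (0:ℝ) < 1 - p),
      mul_pos (by linarith : (0:ℝ) < 1 - s) hp0]
  have hE : T p - t / (s + t)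
      = (p - t / (s + t)) * ((1 - t + (t - s) * p) / (1 - p ^ 2 * s - (1 - p) ^ 2 * t)) := by
    rw [hT p]
    field_simp
    ring
  have hc1 : (1 - t + (t - s) * p) / (1 - p ^ 2 * s - (1 - p) ^ 2 * t) < 1 := by
    rw [div_lt_one hD]
    nlinarith [mul_pos (mul_pos hp0 (by linarith : (0:ℝ) < 1 - p)) hst]
  have habs : 0 < |p - t / (s + t)| := abs_pos.2 (sub_ne_zero.2 hpq)
  rw [hE, abs_mul, abs_of_pos (div_pos hnum hD)]
  exact mul_lt_of_lt_one_right habs hc1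
end
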